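/- If a nonempty finite digraph D has a valid DAG-depth decomposition (P, org) of depth k, then ddp(D) ≤ k. -/

import Mathlib

open scoped Classical

noncomputable section

/-- A finite directed graph: a finite vertex set together with an adjacency
relation whose edges join vertices of the graph. -/
structure FinDigraph (α : Type) where
  verts : Finset α
  Adj : α → α → Prop
  adj_mem : ∀ u v, Adj u v → u ∈ verts ∧ v ∈ verts

namespace FinDigraph

variable {α β : Type}

/-- The out-neighbourhood `N⁺_D(v)`. -/
def outNbhd (D : FinDigraph α) (v : α) : Set α := {u | D.Adj v u}

/-- The set of vertices reachable from `s` by a (possibly trivial) directed path. -/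
def reachSet (D : FinDigraph α) (s : α) : Finset α :=
  D.verts.filter fun v => Relation.ReflTransGen D.Adj s v

/-- A reachable fragment: an inclusion-maximal set among the reachable sets. -/
def IsFragment (D : FinDigraph α) (R : Finset α) : Prop :=
  (∃ s ∈ D.verts, R = D.reachSet s) ∧
  ∀ s ∈ D.verts, R ⊆ D.reachSet s → R = D.reachSet s

/-- The collection of all reachable fragments of `D`. -/
def fragments (D : FinDigraph α) : Finset (Finset α) :=
  D.verts.powerset.filter fun R => D.IsFragment R

/-- The induced subdigraph `D[S]`. -/
def induce (D : FinDigraph α) (S : Finset α) : FinDigraph α where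
  verts := D.verts ∩ S
  Adj u v := D.Adj u v ∧ u ∈ S ∧ v ∈ S
  adj_mem := fun u v h => ⟨Finset.mem_inter.mpr ⟨(D.adj_mem u v h.1).1, h.2.1⟩,
    Finset.mem_inter.mpr ⟨(D.adj_mem u v h.1).2, h.2.2⟩⟩

/-- Deletion of a vertex: `D − v = D[V(D) ∖ {v}]`. -/
def deleteVert (D : FinDigraph α) (v : α) : FinDigraph α :=
  D.induce (D.verts.erase v)

/-- Fuel-based helper for DAG-depth; the fuel `|V(D)|` always suffices since each
recursive call strictly decreases the number of vertices. -/
def ddpAux : ℕ → FinDigraph α → ℕ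
  | 0, _ => 0
  | n+1, D =>
    if hcard : D.verts.card ≤ 1 then 1
    else if D.fragments.card = 1 then
      1 + D.verts.inf' (Finset.card_pos.mp (by omega)) fun v => ddpAux n (D.deleteVert v)
    else
      D.fragments.sup fun R => ddpAux n (D.induce R)

/-- The DAG-depth of a digraph. -/
def ddp (D : FinDigraph α) : ℕ := ddpAux D.verts.card D

/-- A DAG: a (finite) digraph with no directed cycles. -/
def IsDag (P : FinDigraph α) : Prop := ∀ v, ¬ Relation.TransGen P.Adj v v

/-- A root of a DAG: a vertex of indegree zero. -/
def IsRoot (P : FinDigraph α) (r : α) : Prop := r ∈ P.verts ∧ ∀ u, ¬ P.Adj u r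

/-- `y` is a descendant of `x`: there is a (possibly trivial) directed path from `x` to `y`. -/
def Desc (P : FinDigraph α) (x y : α) : Prop := Relation.ReflTransGen P.Adj x y

/-- `l` is a directed path in `P` starting at a root of `P` and ending at `v`. -/
def IsRootPath (P : FinDigraph α) (l : List α) (v : α) : Prop :=
  l ≠ [] ∧ l.Chain' P.Adj ∧ (∀ x ∈ l, x ∈ P.verts) ∧
  (∃ r, l.head? = some r ∧ P.IsRoot r) ∧ l.getLast? = some v

/-- The depth of a DAG: the maximum number of vertices on a directed path. -/
def depth (P : FinDigraph α) : ℕ :=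
  sSup {n : ℕ | ∃ l : List α, l.Chain' P.Adj ∧ (∀ x ∈ l, x ∈ P.verts) ∧ l.length = n}

/-- The Neighbor cover condition for a DAG-depth decomposition `(P, org)` of `D`. -/
def NeighborCover (D : FinDigraph α) (P : FinDigraph β) (org : β → α) : Prop :=
  ∀ v' ∈ P.verts, ∀ u, D.Adj (org v') u →
    (∃ u' ∈ P.verts, org u' = u ∧ P.Desc v' u') ∨
    (∀ l, P.IsRootPath l v' → ∃ u' ∈ l, org u' = u)

/-- `(P, org)` is a valid DAG-depth decomposition of `D`: `P` is a DAG, `org` maps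
`V(P)` onto `V(D)`, and the Neighbor cover condition holds. -/
def IsValidDecomp (D : FinDigraph α) (P : FinDigraph β) (org : β → α) : Prop :=
  P.IsDag ∧ (∀ v' ∈ P.verts, org v' ∈ D.verts) ∧
  (∀ v ∈ D.verts, ∃ v' ∈ P.verts, org v' = v) ∧
  NeighborCover D P org


end FinDigraph

/-!
Induction on `|V(D)|` along the recursion defining `ddp`. Contracting `P` onto the preimage `Q`
of a set `S` of vertices of `D` (joining `u, v ∈ Q` whenever some `P`-path from `u` to `v` has all
its inner vertices outside `Q`) yields a valid decomposition of `D[S]` of no greater depth; this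
settles the case of several reachable fragments. If `D = R_D(s)`, take a root `r` of `P` above a
preimage of `s`. The neighbor cover condition, propagated along paths from `s`, shows that the
descendants of `r` already cover `D`, so `P` may be restricted to them. Contracting onto the
preimage of `V(D) ∖ {org r}` then gives a decomposition of `D − org r` each of whose chains
extends by `r`, so its depth is smaller than that of `P`.
-/

open Relation

section Chains

variable {γ : Type*} {r s : γ → γ → Prop}

theorem Relation.TransGen.extend_isChain_cons {a b : γ} {l : List γ} (h : TransGen r a b)
    (hl : (b :: l).IsChain r) : ∃ l', (a :: l').IsChain r ∧ l.length < l'.length := by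
  induction h using TransGen.head_induction_on with
  | single hab => exact ⟨b :: l, hl.cons_cons hab, by simp⟩
  | head hac _ ih =>
    obtain ⟨l', hl', hlen⟩ := ih
    exact ⟨_ :: l', hl'.cons_cons hac, by simp only [List.length_cons]; omega⟩

theorem List.IsChain.refine_of_le_transGen (hrs : r ≤ TransGen s) :
    ∀ {a : γ} {l : List γ}, (a :: l).IsChain r → ∃ l', (a :: l').IsChain s ∧ l.length ≤ l'.length
  | a, [], _ => ⟨[], .singleton a, le_rfl⟩
  | a, b :: l, hl => by
    rw [List.isChain_cons_cons] at hl
    obtain ⟨l₁, hl₁, hlen₁⟩ := refine_of_le_transGen hrs hl.2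
    obtain ⟨l₂, hl₂, hlen₂⟩ := TransGen.extend_isChain_cons (hrs a b hl.1) hl₁
    exact ⟨l₂, hl₂, by simp only [List.length_cons]; omega⟩

end Chains

namespace FinDigraph

variable {α β : Type}

theorem mem_reachSet {D : FinDigraph α} {s v : α} :
    v ∈ D.reachSet s ↔ v ∈ D.verts ∧ ReflTransGen D.Adj s v :=
  Finset.mem_filter

theorem self_mem_reachSet {D : FinDigraph α} {s : α} (hs : s ∈ D.verts) : s ∈ D.reachSet s :=
  mem_reachSet.mpr ⟨hs, .refl⟩

section Dag

variable {P : FinDigraph β}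

theorem mem_verts_of_isChain_cons {a : β} {l : List β} (hl : (a :: l).IsChain P.Adj)
    (ha : a ∈ P.verts) : ∀ x ∈ a :: l, x ∈ P.verts :=
  hl.induction _ _ (fun _ _ h _ => (P.adj_mem _ _ h).2) fun _ => ha

theorem IsDag.nodup_of_isChain (hP : P.IsDag) {l : List β} (hl : l.IsChain P.Adj) : l.Nodup :=
  haveI : Std.Irrefl (TransGen P.Adj) := ⟨hP⟩
  (List.isChain_iff_pairwise.mp (hl.imp fun _ _ => TransGen.single)).nodup

theorem IsDag.bddAbove_chainLengths (hP : P.IsDag) :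
    BddAbove {n : ℕ | ∃ l : List β, l.IsChain P.Adj ∧ (∀ x ∈ l, x ∈ P.verts) ∧ l.length = n} := by
  refine ⟨P.verts.card, ?_⟩
  rintro _ ⟨l, hl, hv, rfl⟩
  rw [← List.toFinset_card_of_nodup (hP.nodup_of_isChain hl)]
  exact Finset.card_le_card fun x hx => hv x (List.mem_toFinset.mp hx)

theorem IsDag.length_le_depth (hP : P.IsDag) {a : β} {l : List β} (hl : (a :: l).IsChain P.Adj)
    (ha : a ∈ P.verts) : l.length + 1 ≤ P.depth :=
  le_csSup hP.bddAbove_chainLengths ⟨a :: l, hl, mem_verts_of_isChain_cons hl ha, rfl⟩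

theorem IsDag.exists_isChain_length_eq_depth (hP : P.IsDag) :
    ∃ l : List β, l.IsChain P.Adj ∧ (∀ x ∈ l, x ∈ P.verts) ∧ l.length = P.depth :=
  (Nat.sSup_mem · hP.bddAbove_chainLengths) ⟨0, [], .nil, by simp, rfl⟩

theorem IsDag.wellFounded_adj (hP : P.IsDag) : WellFounded P.Adj := by
  let ancestors (x : β) : Finset β := P.verts.filter (TransGen P.Adj · x)
  refine Subrelation.wf (r := InvImage (· < ·) fun x => (ancestors x).card) ?_
    (InvImage.wf _ wellFounded_lt)
  intro a b hab
  refine Finset.card_lt_card ⟨fun y hy => ?_, fun hsub => ?_⟩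
  · simp only [ancestors, Finset.mem_filter] at hy ⊢
    exact ⟨hy.1, hy.2.tail hab⟩
  · have ha : a ∈ ancestors b := Finset.mem_filter.mpr ⟨(P.adj_mem _ _ hab).1, .single hab⟩
    exact hP a (Finset.mem_filter.mp (hsub ha)).2

theorem IsDag.exists_isRoot_desc (hP : P.IsDag) {x : β} (hx : x ∈ P.verts) :
    ∃ r, P.IsRoot r ∧ P.Desc r x := by
  obtain ⟨r, ⟨hr, hrx⟩, hmin⟩ :=
    hP.wellFounded_adj.has_min {y | y ∈ P.verts ∧ P.Desc y x} ⟨x, hx, .refl⟩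
  exact ⟨r, ⟨hr, fun u hu => hmin u ⟨(P.adj_mem _ _ hu).1, hrx.head hu⟩ hu⟩, hrx⟩

end Dag

section RootPaths

variable {P : FinDigraph β}

/-- The negation of condition (2) of the neighbor cover (with `X = org⁻¹(u)`), as reachability. -/
def RootReachableAvoiding (P : FinDigraph β) (X : Set β) (v : β) : Prop :=
  ∃ r, P.IsRoot r ∧ r ∉ X ∧ ReflTransGen (fun a b => P.Adj a b ∧ b ∉ X) r v

theorem exists_isRootPath_avoiding_iff {X : Set β} {v : β} :
    (∃ l, P.IsRootPath l v ∧ ∀ x ∈ l, x ∉ X) ↔ P.RootReachableAvoiding X v := by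
  constructor
  · rintro ⟨_ | ⟨r, l⟩, ⟨hne, hl, -, ⟨r', hr', hroot⟩, hlast⟩, hX⟩
    · exact absurd rfl hne
    obtain rfl : r = r' := Option.some.inj hr'
    refine ⟨r, hroot, hX r List.mem_cons_self,
      List.relationReflTransGen_of_exists_isChain_cons l ?_ ?_⟩
    · exact hl.imp_of_mem_tail_imp fun a b _ hb hab => ⟨hab, hX b (List.mem_of_mem_tail hb)⟩
    · simpa [List.getLast?_eq_some_getLast] using hlast
  · rintro ⟨r, hroot, hrX, hrv⟩
    obtain ⟨l, hl, hlast⟩ := List.exists_isChain_cons_of_relationReflTransGen hrv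
    have hP : (r :: l).IsChain P.Adj := hl.imp fun _ _ h => h.1
    refine ⟨r :: l, ⟨by simp, hP, mem_verts_of_isChain_cons hP hroot.1, ⟨r, rfl, hroot⟩, ?_⟩,
      hl.induction _ _ (fun _ _ h _ => h.2) fun _ => hrX⟩
    simpa [List.getLast?_eq_some_getLast] using hlast

theorem neighborCover_iff {D : FinDigraph α} {org : β → α} :
    NeighborCover D P org ↔ ∀ v' ∈ P.verts, ∀ u, D.Adj (org v') u →
      (∃ u' ∈ P.verts, org u' = u ∧ P.Desc v' u') ∨
      ¬ P.RootReachableAvoiding {x | org x = u} v' := by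
  simp [NeighborCover, ← exists_isRootPath_avoiding_iff]

end RootPaths

section Contraction

variable {P : FinDigraph β} {Q : Finset β}

def contract (P : FinDigraph β) (Q : Finset β) : FinDigraph β where
  verts := Q
  Adj u v := u ∈ Q ∧ v ∈ Q ∧ ∃ w, P.Adj u w ∧ ReflTransGen (fun a b => P.Adj a b ∧ a ∉ Q) w v
  adj_mem _ _ h := ⟨h.1, h.2.1⟩

theorem transGen_of_contract_adj {u v : β} (h : (P.contract Q).Adj u v) : TransGen P.Adj u v :=
  let ⟨_, _, _, huw, hwv⟩ := h
  TransGen.head' huw (ReflTransGen.mono (fun _ _ h => h.1) _ _ hwv)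

theorem IsDag.contract (hP : P.IsDag) (Q : Finset β) : (P.contract Q).IsDag := fun v hv =>
  hP v (TransGen.lift' id (fun _ _ => transGen_of_contract_adj) _ _ hv)

theorem reflTransGen_contract {x y : β} (h : ReflTransGen P.Adj x y) (hx : x ∈ Q) (hy : y ∈ Q) :
    ReflTransGen (P.contract Q).Adj x y := by
  suffices H : ∀ z, ReflTransGen P.Adj z y → ∃ q ∈ Q,
      ReflTransGen (fun a b => P.Adj a b ∧ a ∉ Q) z q ∧ ReflTransGen (P.contract Q).Adj q y by
    obtain ⟨q, -, hxq, hqy⟩ := H x h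
    rcases hxq.cases_head with rfl | ⟨_, hx', _⟩
    · exact hqy
    · exact absurd hx hx'.2
  intro z hz
  induction hz using ReflTransGen.head_induction_on with
  | refl => exact ⟨y, hy, .refl, .refl⟩
  | @head z z' hzz' _ ih =>
    obtain ⟨q, hq, hz'q, hqy⟩ := ih
    by_cases hzQ : z ∈ Q
    · exact ⟨z, hzQ, .refl, hqy.head ⟨hzQ, hq, z', hzz', hz'q⟩⟩
    · exact ⟨q, hq, hz'q.head ⟨hzz', hzQ⟩, hqy⟩

theorem IsDag.exists_isRoot_of_isRoot_contract (hP : P.IsDag) (hQ : Q ⊆ P.verts) {r : β}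
    (hr : (P.contract Q).IsRoot r) :
    ∃ r₀, P.IsRoot r₀ ∧ ReflTransGen (fun a b => P.Adj a b ∧ a ∉ Q) r₀ r := by
  obtain ⟨r₀, ⟨hr₀, hr₀r⟩, hmin⟩ := hP.wellFounded_adj.has_min
    {y | y ∈ P.verts ∧ ReflTransGen (fun a b => P.Adj a b ∧ a ∉ Q) y r} ⟨r, hQ hr.1, .refl⟩
  refine ⟨r₀, ⟨hr₀, fun p hp => ?_⟩, hr₀r⟩
  by_cases hpQ : p ∈ Q
  · exact hr.2 p ⟨hpQ, hr.1, r₀, hp, hr₀r⟩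
  · exact hmin p ⟨(P.adj_mem _ _ hp).1, hr₀r.head ⟨hp, hpQ⟩⟩ hp

theorem reflTransGen_avoiding_of_inner_notMem {X : Set β}
    (hX : ∀ x ∈ P.verts, x ∈ X → x ∈ Q) {a b : β}
    (h : ReflTransGen (fun a b => P.Adj a b ∧ a ∉ Q) a b) (hb : b ∉ X) :
    a ∉ X ∧ ReflTransGen (fun a b => P.Adj a b ∧ b ∉ X) a b := by
  induction h using ReflTransGen.head_induction_on with
  | refl => exact ⟨hb, .refl⟩
  | head hac _ ih =>
    exact ⟨fun ha => hac.2 (hX _ (P.adj_mem _ _ hac.1).1 ha), ih.2.head ⟨hac.1, ih.1⟩⟩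

theorem RootReachableAvoiding.of_contract (hP : P.IsDag) (hQ : Q ⊆ P.verts) {X : Set β}
    (hX : ∀ x ∈ P.verts, x ∈ X → x ∈ Q) {v : β} (h : (P.contract Q).RootReachableAvoiding X v) :
    P.RootReachableAvoiding X v := by
  obtain ⟨r, hr, hrX, hrv⟩ := h
  obtain ⟨r₀, hr₀, hr₀r⟩ := hP.exists_isRoot_of_isRoot_contract hQ hr
  obtain ⟨hr₀X, hr₀r⟩ := reflTransGen_avoiding_of_inner_notMem hX hr₀r hrX
  refine ⟨r₀, hr₀, hr₀X, hr₀r.trans (ReflTransGen.lift' id (fun a b hab => ?_) _ _ hrv)⟩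
  obtain ⟨⟨-, -, w, haw, hwb⟩, hbX⟩ := hab
  obtain ⟨hwX, hwb⟩ := reflTransGen_avoiding_of_inner_notMem hX hwb hbX
  exact hwb.head ⟨haw, hwX⟩

theorem IsDag.depth_contract_le (hP : P.IsDag) (hQ : Q ⊆ P.verts) :
    (P.contract Q).depth ≤ P.depth := by
  obtain ⟨_ | ⟨a, l⟩, hl, hv, hlen⟩ := (hP.contract Q).exists_isChain_length_eq_depth
  · simp [← hlen]
  obtain ⟨l', hl', hlen'⟩ := hl.refine_of_le_transGen fun _ _ => transGen_of_contract_adj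
  have := hP.length_le_depth hl' (hQ (hv a List.mem_cons_self))
  simp only [List.length_cons] at hlen
  omega

theorem IsDag.depth_contract_lt (hP : P.IsDag) {r : β} (hr : r ∈ P.verts)
    (hQ : ∀ q ∈ Q, TransGen P.Adj r q) : (P.contract Q).depth < P.depth := by
  obtain ⟨_ | ⟨a, l⟩, hl, hv, hlen⟩ := (hP.contract Q).exists_isChain_length_eq_depth
  · exact hlen ▸ hP.length_le_depth (.singleton r) hr
  obtain ⟨l', hl', hlen'⟩ := hl.refine_of_le_transGen fun _ _ => transGen_of_contract_adj
  obtain ⟨l'', hl'', hlen''⟩ := TransGen.extend_isChain_cons (hQ a (hv a List.mem_cons_self)) hl'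
  have := hP.length_le_depth hl'' hr
  simp only [List.length_cons] at hlen
  omega

end Contraction

section Descendants

variable {P : FinDigraph β} {r : β}

theorem IsDag.induce (hP : P.IsDag) (S : Finset β) : (P.induce S).IsDag := fun v hv =>
  hP v (TransGen.mono (fun _ _ h => h.1) _ _ hv)

theorem IsDag.depth_induce_le (hP : P.IsDag) (S : Finset β) : (P.induce S).depth ≤ P.depth := by
  obtain ⟨_ | ⟨a, l⟩, hl, hv, hlen⟩ := (hP.induce S).exists_isChain_length_eq_depth
  · simp [← hlen]
  exact hlen ▸ hP.length_le_depth (hl.imp fun _ _ h => h.1)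
    (Finset.mem_inter.mp (hv a List.mem_cons_self)).1

theorem reflTransGen_induce_reachSet {x y : β} (hrx : ReflTransGen P.Adj r x)
    (hxy : ReflTransGen P.Adj x y) : ReflTransGen (P.induce (P.reachSet r)).Adj x y := by
  induction hxy with
  | refl => exact .refl
  | @tail b c hxb hbc ih =>
    have hrb := hrx.trans hxb
    exact ih.tail ⟨hbc, mem_reachSet.mpr ⟨(P.adj_mem _ _ hbc).1, hrb⟩,
      mem_reachSet.mpr ⟨(P.adj_mem _ _ hbc).2, hrb.tail hbc⟩⟩

theorem RootReachableAvoiding.of_induce_reachSet (hr : P.IsRoot r) {X : Set β} {v : β}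
    (h : (P.induce (P.reachSet r)).RootReachableAvoiding X v) : P.RootReachableAvoiding X v := by
  obtain ⟨r', ⟨hr'mem, hr'root⟩, hr'X, hr'v⟩ := h
  have hrr' : ReflTransGen P.Adj r r' := (mem_reachSet.mp (Finset.mem_inter.mp hr'mem).2).2
  obtain rfl : r' = r := by
    rcases hrr'.cases_tail with rfl | ⟨y, hry, hyr'⟩
    · rfl
    · exact absurd ⟨hyr', mem_reachSet.mpr ⟨(P.adj_mem _ _ hyr').1, hry⟩,
        (Finset.mem_inter.mp hr'mem).2⟩ (hr'root y)
  exact ⟨r', hr, hr'X, ReflTransGen.mono (fun _ _ h => ⟨h.1.1, h.2⟩) _ _ hr'v⟩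

theorem rootReachableAvoiding_of_forall_reachSet (hr : P.IsRoot r) {X : Set β} {v : β}
    (hv : v ∈ P.reachSet r) (hX : ∀ x ∈ P.reachSet r, x ∉ X) : P.RootReachableAvoiding X v := by
  refine ⟨r, hr, hX r (mem_reachSet.mpr ⟨hr.1, .refl⟩), ?_⟩
  obtain ⟨-, hrv⟩ := mem_reachSet.mp hv
  clear hv
  induction hrv with
  | refl => exact .refl
  | tail hrb hbc ih =>
    exact ih.tail ⟨hbc, hX _ (mem_reachSet.mpr ⟨(P.adj_mem _ _ hbc).2, hrb.tail hbc⟩)⟩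

end Descendants

section Fragments

variable {D : FinDigraph α}

theorem verts_deleteVert (v : α) : (D.deleteVert v).verts = D.verts.erase v :=
  Finset.inter_eq_right.mpr (Finset.erase_subset _ _)

theorem exists_mem_fragments_mem {v : α} (hv : v ∈ D.verts) : ∃ R ∈ D.fragments, v ∈ R := by
  obtain ⟨t, ht, hmax⟩ := (D.verts.filter fun t => v ∈ D.reachSet t).exists_max_image
    (fun t => (D.reachSet t).card) ⟨v, Finset.mem_filter.mpr ⟨hv, self_mem_reachSet hv⟩⟩
  obtain ⟨htD, hvt⟩ := Finset.mem_filter.mp ht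
  refine ⟨D.reachSet t, Finset.mem_filter.mpr ⟨Finset.mem_powerset.mpr (Finset.filter_subset _ _),
    ⟨t, htD, rfl⟩, fun s hs hts => ?_⟩, hvt⟩
  exact Finset.eq_of_subset_of_card_le hts (hmax s (Finset.mem_filter.mpr ⟨hs, hts hvt⟩))

theorem exists_reachSet_eq_verts (h : D.fragments.card = 1) :
    ∃ s ∈ D.verts, D.reachSet s = D.verts := by
  obtain ⟨R, hR⟩ := Finset.card_eq_one.mp h
  obtain ⟨-, ⟨s, hs, rfl⟩, -⟩ := Finset.mem_filter.mp (hR ▸ Finset.mem_singleton_self R)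
  refine ⟨s, hs, (Finset.filter_subset _ _).antisymm fun v hv => ?_⟩
  obtain ⟨R', hR', hvR'⟩ := exists_mem_fragments_mem hv
  rw [hR, Finset.mem_singleton] at hR'
  rwa [hR'] at hvR'

theorem nonempty_of_mem_fragments {R : Finset α} (hR : R ∈ D.fragments) : R.Nonempty := by
  obtain ⟨-, ⟨s, hs, rfl⟩, -⟩ := Finset.mem_filter.mp hR
  exact ⟨s, self_mem_reachSet hs⟩

theorem ssubset_verts_of_mem_fragments (h : D.fragments.card ≠ 1) {R : Finset α}
    (hR : R ∈ D.fragments) : R ⊂ D.verts := by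
  obtain ⟨hRD, ⟨s, hs, rfl⟩, -⟩ := Finset.mem_filter.mp hR
  refine (Finset.mem_powerset.mp hRD).ssubset_of_ne fun hsD => h <| Finset.card_eq_one.mpr
    ⟨_, Finset.eq_singleton_iff_unique_mem.mpr ⟨hR, fun R' hR' => ?_⟩⟩
  obtain ⟨hR'D, -, hmax⟩ := Finset.mem_filter.mp hR'
  exact hmax s hs (hsD ▸ Finset.mem_powerset.mp hR'D)

end Fragments

namespace IsValidDecomp

variable {D : FinDigraph α} {P : FinDigraph β} {org : β → α}

theorem one_le_depth (h : IsValidDecomp D P org) (hD : D.verts.Nonempty) : 1 ≤ P.depth := by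
  obtain ⟨v, hv⟩ := hD
  obtain ⟨v', hv', -⟩ := h.2.2.1 v hv
  exact h.1.length_le_depth (.singleton v') hv'

theorem contract (h : IsValidDecomp D P org) (S : Finset α) :
    IsValidDecomp (D.induce S) (P.contract (P.verts.filter fun v' => org v' ∈ S)) org := by
  obtain ⟨hP, hmem, hsurj, hcov⟩ := h
  set Q := P.verts.filter fun v' => org v' ∈ S
  have hQ : Q ⊆ P.verts := Finset.filter_subset _ _
  refine ⟨hP.contract Q, fun v' hv' => ?_, fun v hv => ?_, neighborCover_iff.mpr ?_⟩
  · obtain ⟨hv', hS⟩ := Finset.mem_filter.mp hv'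
    exact Finset.mem_inter.mpr ⟨hmem v' hv', hS⟩
  · obtain ⟨hv, hS⟩ := Finset.mem_inter.mp hv
    obtain ⟨v', hv', rfl⟩ := hsurj v hv
    exact ⟨v', Finset.mem_filter.mpr ⟨hv', hS⟩, rfl⟩
  · rintro v' hv' u ⟨hadj, -, huS⟩
    rcases neighborCover_iff.mp hcov v' (hQ hv') u hadj with ⟨u', hu', rfl, hdesc⟩ | hblock
    · have hu'Q : u' ∈ Q := Finset.mem_filter.mpr ⟨hu', huS⟩
      exact .inl ⟨u', hu'Q, rfl, reflTransGen_contract hdesc hv' hu'Q⟩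
    · refine .inr fun h => hblock (h.of_contract hP hQ fun x hx hxu => ?_)
      exact Finset.mem_filter.mpr ⟨hx, (hxu : org x = u) ▸ huS⟩

theorem induce_reachSet (h : IsValidDecomp D P org) {r : β} (hr : P.IsRoot r)
    (hcover : ∀ v ∈ D.verts, ∃ v' ∈ P.reachSet r, org v' = v) :
    IsValidDecomp D (P.induce (P.reachSet r)) org := by
  obtain ⟨hP, hmem, -, hcov⟩ := h
  refine ⟨hP.induce _, fun v' hv' => hmem v' (Finset.mem_inter.mp hv').1, fun v hv => ?_,
    neighborCover_iff.mpr fun v' hv' u hadj => ?_⟩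
  · obtain ⟨v', hv', rfl⟩ := hcover v hv
    exact ⟨v', Finset.mem_inter.mpr ⟨(mem_reachSet.mp hv').1, hv'⟩, rfl⟩
  obtain ⟨hv'P, hrv'⟩ := Finset.mem_inter.mp hv'
  rcases neighborCover_iff.mp hcov v' hv'P u hadj with ⟨u', hu', rfl, hdesc⟩ | hblock
  · have hru' := (mem_reachSet.mp hrv').2.trans hdesc
    exact .inl ⟨u', Finset.mem_inter.mpr ⟨hu', mem_reachSet.mpr ⟨hu', hru'⟩⟩, rfl,
      reflTransGen_induce_reachSet (mem_reachSet.mp hrv').2 hdesc⟩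
  · exact .inr fun h => hblock (h.of_induce_reachSet hr)

theorem exists_mem_reachSet_org_eq (h : IsValidDecomp D P org) {r s' : β} (hr : P.IsRoot r)
    (hs' : s' ∈ P.reachSet r) {z : α} (hz : ReflTransGen D.Adj (org s') z) :
    ∃ z' ∈ P.reachSet r, org z' = z := by
  induction hz with
  | refl => exact ⟨s', hs', rfl⟩
  | @tail b c _ hbc ih =>
    obtain ⟨b', hb', rfl⟩ := ih
    rcases neighborCover_iff.mp h.2.2.2 b' (mem_reachSet.mp hb').1 c hbc with
      ⟨c', hc', rfl, hdesc⟩ | hblock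
    · exact ⟨c', mem_reachSet.mpr ⟨hc', (mem_reachSet.mp hb').2.trans hdesc⟩, rfl⟩
    · by_contra! hnone
      exact hblock (rootReachableAvoiding_of_forall_reachSet hr hb' hnone)

theorem exists_deleteVert_depth_lt (h : IsValidDecomp D P org) {s : α} (hs : s ∈ D.verts)
    (hreach : D.reachSet s = D.verts) :
    ∃ v ∈ D.verts, ∃ P' : FinDigraph β, IsValidDecomp (D.deleteVert v) P' org ∧
      P'.depth < P.depth := by
  obtain ⟨s', hs', rfl⟩ := h.2.2.1 s hs
  obtain ⟨r, hr, hrs'⟩ := h.1.exists_isRoot_desc hs'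
  have hr' := h.induce_reachSet hr fun z hz =>
    h.exists_mem_reachSet_org_eq hr (mem_reachSet.mpr ⟨hs', hrs'⟩) (mem_reachSet.mp (hreach ▸ hz)).2
  refine ⟨org r, h.2.1 r hr.1, _, hr'.contract (D.verts.erase (org r)), ?_⟩
  calc _ < (P.induce (P.reachSet r)).depth := (h.1.induce _).depth_contract_lt
        (Finset.mem_inter.mpr ⟨hr.1, self_mem_reachSet hr.1⟩) fun q hq => ?_
    _ ≤ P.depth := h.1.depth_induce_le _
  obtain ⟨hq, hqr⟩ := Finset.mem_filter.mp hq
  refine (reflTransGen_iff_eq_or_transGen.mp (reflTransGen_induce_reachSet .refl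
    (mem_reachSet.mp (Finset.mem_inter.mp hq).2).2)).resolve_left ?_
  rintro rfl
  exact Finset.notMem_erase _ _ hqr

end IsValidDecomp

theorem ddpAux_le_depth : ∀ (n : ℕ) {D : FinDigraph α} {P : FinDigraph β} {org : β → α},
    D.verts.card ≤ n → D.verts.Nonempty → IsValidDecomp D P org → ddpAux n D ≤ P.depth
  | 0, _, _, _, hcard, hD, _ => absurd hD.card_pos (by omega)
  | n + 1, D, P, org, hcard, hD, h => by
    rw [ddpAux]
    split_ifs with hone hfrag
    · exact h.one_le_depth hD
    · obtain ⟨s, hs, hreach⟩ := exists_reachSet_eq_verts hfrag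
      obtain ⟨v, hv, P', h', hdepth⟩ := h.exists_deleteVert_depth_lt hs hreach
      have hcard' : (D.deleteVert v).verts.card = D.verts.card - 1 := by
        rw [verts_deleteVert, Finset.card_erase_of_mem hv]
      have := ddpAux_le_depth n (by omega) (Finset.card_pos.mp (by omega)) h'
      have := Finset.inf'_le (fun v => ddpAux n (D.deleteVert v)) hv
      omega
    · refine Finset.sup_le fun R hR => ?_
      have hRD := ssubset_verts_of_mem_fragments hfrag hR
      have hverts : (D.induce R).verts = R := Finset.inter_eq_right.mpr hRD.subset
      have hcard' := Finset.card_lt_card hRD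
      calc ddpAux n (D.induce R) ≤ _ := ddpAux_le_depth n (by rw [hverts]; omega)
            (by rw [hverts]; exact nonempty_of_mem_fragments hR) (h.contract R)
        _ ≤ P.depth := h.1.depth_contract_le (Finset.filter_subset _ _)

end FinDigraph

open FinDigraph in
theorem ddp_le_depth_of_valid_decomp_general {α β : Type} (D : FinDigraph α)
    (P : FinDigraph β) (org : β → α)
    (h : IsValidDecomp D P org) (k : ℕ) (hk : depth P = k) :
    ddp D ≤ k := by
  subst hk
  rcases D.verts.eq_empty_or_nonempty with hD | hD
  · simp [ddp, hD, ddpAux]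
  · exact ddpAux_le_depth _ le_rfl hD h

open FinDigraph in
/-- If a nonempty finite digraph `D` has a valid DAG-depth decomposition of depth `k`,
then `ddp D ≤ k`. -/
theorem ddp_le_depth_of_valid_decomp {α β : Type} (D : FinDigraph α)
    (hne : D.verts.Nonempty) (P : FinDigraph β) (org : β → α)
    (h : IsValidDecomp D P org) (k : ℕ) (hk : depth P = k) :
    ddp D ≤ k :=
  ddp_le_depth_of_valid_decomp_general D P org h k hk
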